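/- Suppose σ > t/√(2π), t > 0, Δ ≥ 0. Then the trade-off function between the lattice discrete Gaussians N_{tℤ}(0, σ²) and N_{tℤ}(Δ, σ²) (with Δ ∈ tℤ) satisfies T(N_{tℤ}(0,σ²), N_{tℤ}(Δ,σ²))(α) ≥ G_{(Δ+2t)/σ}(α) for all α ∈ (0,1), where G_μ(α) = Φ(Φ⁻¹(1−α) − μ). -/

import Mathlib

open MeasureTheory ProbabilityTheory Real

/-- The discrete Gaussian measure on the lattice `tℤ` centered at `c` with variance
parameter `v`, assigning to `t·z` a mass proportional to `exp(−(t z − c)²/(2v))`. -/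
noncomputable def latticeGauss (t v c : ℝ) : Measure ℝ :=
  Measure.sum fun z : ℤ =>
    (ENNReal.ofReal (Real.exp (-(t * (z : ℝ) - c) ^ 2 / (2 * v)) /
        ∑' y : ℤ, Real.exp (-(t * (y : ℝ) - c) ^ 2 / (2 * v)))) • Measure.dirac (t * (z : ℝ))

/-- Trade-off function `T(P,Q)(α)`: the minimal type II error over measurable
randomized tests with type I error at most `α`. -/
noncomputable def tradeOff (P Q : Measure ℝ) (α : ℝ) : ℝ :=
  sInf {β : ℝ | ∃ φ : ℝ → ℝ, Measurable φ ∧ (∀ x, φ x ∈ Set.Icc (0 : ℝ) 1) ∧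
    ∫ x, φ x ∂P ≤ α ∧ β = 1 - ∫ x, φ x ∂Q}

/-- Standard normal CDF. -/
noncomputable def Phi (x : ℝ) : ℝ := ((gaussianReal 0 1) (Set.Iic x)).toReal

/-- Inverse of the standard normal CDF. -/
noncomputable def PhiInv (q : ℝ) : ℝ := sInf {x : ℝ | q ≤ Phi x}

/-- The Gaussian trade-off function `G_μ(α) = Φ(Φ⁻¹(1−α) − μ)`. -/
noncomputable def Gmu (m α : ℝ) : ℝ := Phi (PhiInv (1 - α) - m)

/-!
Neyman–Pearson with a Lagrange multiplier. Put `s = Δ + 2t`, `y₀ = σ Φ⁻¹(1 - α)` and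
`k = exp ((s y₀ - s²/2) / σ²)`, the density ratio of `N(s, σ²)` to `N(0, σ²)` at `y₀`. For a test
`φ` of level `α`, `E_Q φ - k E_P φ ≤ Q(A) - k P(A)`, where `A = {tz > c}` is the set on which the
ratio of the masses of `Q` and `P` exceeds `k`. Translating by `Δ ∈ tℤ` turns `Q(A)` into a tail
of `P`, and the tails of `P` lie between Gaussian tails shifted by `±t`: the lattice Gaussian is
stochastically dominated by the continuous Gaussian rounded up to `tℤ`, since the ratio of their
masses is monotone. This bounds `Q(A) - k P(A)` by `T(y - s) - k T(y)`, `T` the Gaussian tail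
and `y = c + t`; as a function of `y` this is maximal at `y₀`, where it is `1 - G_{s/σ}(α) - kα`.
-/

open Set Filter

section TsumInequalities

variable {ι : Type*}

theorem tsum_mul_sub_le_tsum_subtype_sub {p q φ : ι → ℝ} (hp : Summable p) (hq : Summable q)
    (hφ : ∀ i, φ i ∈ Icc (0 : ℝ) 1) {k : ℝ} {A : Set ι}
    (hA : ∀ i ∈ A, k * p i ≤ q i) (hAc : ∀ i ∉ A, q i ≤ k * p i) :
    ∑' i, q i * φ i - k * ∑' i, p i * φ i ≤ ∑' i : A, q i - k * ∑' i : A, p i := by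
  have hbound {f : ι → ℝ} (hf : Summable f) : Summable fun i => f i * φ i :=
    hf.abs.of_norm_bounded fun i => by
      simpa [abs_mul, abs_of_nonneg (hφ i).1] using
        mul_le_of_le_one_right (abs_nonneg (f i)) (hφ i).2
  have hf : Summable fun i => q i - k * p i := hq.sub (hp.mul_left k)
  calc ∑' i, q i * φ i - k * ∑' i, p i * φ i = ∑' i, (q i - k * p i) * φ i := by
        simp_rw [sub_mul, mul_assoc]
        rw [(hbound hq).tsum_sub ((hbound hp).mul_left k), tsum_mul_left]
    _ ≤ ∑' i, A.indicator (fun i => q i - k * p i) i := by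
        refine (hbound hf).tsum_le_tsum (fun i => ?_) (hf.indicator A)
        by_cases hi : i ∈ A
        · rw [indicator_of_mem hi]
          exact mul_le_of_le_one_right (sub_nonneg.2 (hA i hi)) (hφ i).2
        · rw [indicator_of_notMem hi]
          exact mul_nonpos_of_nonpos_of_nonneg (sub_nonpos.2 (hAc i hi)) (hφ i).1
    _ = ∑' i : A, q i - k * ∑' i : A, p i := by
        rw [tsum_subtype, tsum_subtype, ← tsum_mul_left,
          ← (hq.indicator A).tsum_sub ((hp.indicator A).mul_left k)]
        congr 1 with i
        by_cases hi : i ∈ A <;> simp [hi]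

theorem tsum_subtype_mul_tsum_le {a b : ι → ℝ} (ha : Summable a) (hb : Summable b) {A : Set ι}
    (h : ∀ i ∈ A, ∀ j ∉ A, a i * b j ≤ b i * a j) :
    (∑' i : A, a i) * ∑' i, b i ≤ (∑' i : A, b i) * ∑' i, a i := by
  have hcross :
      (∑' i : A, a i) * ∑' j : ↥Aᶜ, b j ≤ (∑' i : A, b i) * ∑' j : ↥Aᶜ, a j := by
    rw [← tsum_mul_right, ← tsum_mul_right]
    refine ((ha.subtype A).mul_right _).tsum_le_tsum (fun i => ?_) ((hb.subtype A).mul_right _)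
    rw [← tsum_mul_left, ← tsum_mul_left]
    exact ((hb.subtype _).mul_left _).tsum_le_tsum (fun j => h i i.2 j j.2)
      ((ha.subtype _).mul_left _)
  rw [← (hb.subtype A).tsum_add_tsum_compl (hb.subtype Aᶜ),
    ← (ha.subtype A).tsum_add_tsum_compl (ha.subtype Aᶜ)]
  nlinarith [hcross]

end TsumInequalities

noncomputable section

def gaussWeight (σ x : ℝ) : ℝ := rexp (-x ^ 2 / (2 * σ ^ 2))

variable {σ : ℝ}

lemma gaussWeight_pos (σ x : ℝ) : 0 < gaussWeight σ x := exp_pos _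

lemma gaussWeight_neg (σ x : ℝ) : gaussWeight σ (-x) = gaussWeight σ x := by
  rw [gaussWeight, neg_sq, gaussWeight]

lemma gaussWeight_eq_exp_neg_mul_sq (σ : ℝ) :
    gaussWeight σ = fun x => rexp (-(2 * σ ^ 2)⁻¹ * x ^ 2) := by
  ext x; rw [gaussWeight]; ring_nf

lemma continuous_gaussWeight (σ : ℝ) : Continuous (gaussWeight σ) := by
  rw [gaussWeight_eq_exp_neg_mul_sq]; fun_prop

lemma integrable_gaussWeight (hσ : σ ≠ 0) : Integrable (gaussWeight σ) := by
  rw [gaussWeight_eq_exp_neg_mul_sq]; exact integrable_exp_neg_mul_sq (by positivity)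

lemma integral_gaussWeight_pos (hσ : σ ≠ 0) : 0 < ∫ x, gaussWeight σ x := by
  rw [gaussWeight_eq_exp_neg_mul_sq, integral_gaussian]; positivity

lemma gaussWeight_sub (σ m u : ℝ) :
    gaussWeight σ (u - m) = rexp ((m * u - m ^ 2 / 2) / σ ^ 2) * gaussWeight σ u := by
  rw [gaussWeight, gaussWeight, ← exp_add]; ring_nf

lemma gaussWeight_mul_le {x q p : ℝ} (hxq : x ≤ q) (hqp : q ≤ p) :
    gaussWeight σ p * gaussWeight σ x ≤ gaussWeight σ (x + (p - q)) * gaussWeight σ q := by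
  rw [show p = q - (q - p) by ring, show x + (q - (q - p) - q) = x - (q - p) by ring,
    gaussWeight_sub, gaussWeight_sub, mul_right_comm]
  refine mul_le_mul_of_nonneg_right (mul_le_mul_of_nonneg_right ?_ (gaussWeight_pos σ _).le)
    (gaussWeight_pos σ _).le
  exact exp_le_exp.2 (div_le_div_of_nonneg_right (by nlinarith) (sq_nonneg σ))

lemma gaussWeight_mul_integral_le {a b h : ℝ} (hab : a ≤ b) (hh : 0 ≤ h) :
    gaussWeight σ b * ∫ x in (a - h)..a, gaussWeight σ x ≤
      (∫ x in (b - h)..b, gaussWeight σ x) * gaussWeight σ a := by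
  have hcont : Continuous fun x => gaussWeight σ (x + (b - a)) := by
    have := continuous_gaussWeight σ; fun_prop
  calc gaussWeight σ b * ∫ x in (a - h)..a, gaussWeight σ x
      = ∫ x in (a - h)..a, gaussWeight σ b * gaussWeight σ x :=
        (intervalIntegral.integral_const_mul _ _).symm
    _ ≤ ∫ x in (a - h)..a, gaussWeight σ (x + (b - a)) * gaussWeight σ a := by
        refine intervalIntegral.integral_mono_on (by linarith)
          ((continuous_const.mul (continuous_gaussWeight σ)).intervalIntegrable _ _)
          ((hcont.mul continuous_const).intervalIntegrable _ _) fun x hx => ?_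
        exact gaussWeight_mul_le hx.2 hab
    _ = (∫ x in (b - h)..b, gaussWeight σ x) * gaussWeight σ a := by
        rw [intervalIntegral.integral_mul_const, intervalIntegral.integral_comp_add_right]
        congr 2 <;> ring

def gaussTail (σ y : ℝ) : ℝ := (∫ x in Ioi y, gaussWeight σ x) / ∫ x, gaussWeight σ x

lemma gaussTail_sub_gaussTail (hσ : σ ≠ 0) (a b : ℝ) :
    gaussTail σ a - gaussTail σ b =
      (∫ x in a..b, gaussWeight σ x) / ∫ x, gaussWeight σ x := by
  rw [gaussTail, gaussTail, ← sub_div, intervalIntegral.integral_Ioi_sub_Ioi'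
    (integrable_gaussWeight hσ).integrableOn (integrable_gaussWeight hσ).integrableOn]

lemma strictAnti_gaussTail (hσ : σ ≠ 0) : StrictAnti (gaussTail σ) := fun a b hab => by
  rw [← sub_pos, gaussTail_sub_gaussTail hσ]
  exact div_pos (intervalIntegral.intervalIntegral_pos_of_pos
    ((continuous_gaussWeight σ).intervalIntegrable a b) (gaussWeight_pos σ) hab)
    (integral_gaussWeight_pos hσ)

lemma continuous_gaussTail (hσ : σ ≠ 0) : Continuous (gaussTail σ) := by
  have h : gaussTail σ =
      fun y => gaussTail σ 0 - (∫ x in 0..y, gaussWeight σ x) / ∫ x, gaussWeight σ x := by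
    ext y; rw [← gaussTail_sub_gaussTail hσ]; ring
  rw [h]
  exact continuous_const.sub (((integrable_gaussWeight hσ).continuous_primitive 0).div_const _)

lemma gaussTail_add_gaussTail_neg (hσ : σ ≠ 0) (y : ℝ) :
    gaussTail σ y + gaussTail σ (-y) = 1 := by
  have hreflect : ∫ x in Ioi (-y), gaussWeight σ x = ∫ x in Iic y, gaussWeight σ x := by
    simpa only [gaussWeight_neg, neg_neg] using integral_comp_neg_Ioi (-y) (gaussWeight σ)
  rw [gaussTail, gaussTail, ← add_div, div_eq_one_iff_eq (integral_gaussWeight_pos hσ).ne',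
    hreflect, add_comm, intervalIntegral.integral_Iic_add_Ioi
      (integrable_gaussWeight hσ).integrableOn (integrable_gaussWeight hσ).integrableOn]

lemma gaussTail_eq_gaussTail_one (hσ : 0 < σ) (y : ℝ) :
    gaussTail σ y = gaussTail 1 (y / σ) := by
  have hscale : gaussWeight σ = fun x => gaussWeight 1 (σ⁻¹ * x) := by
    ext x; simp only [gaussWeight]; congr 1; field_simp
  rw [gaussTail, gaussTail, hscale, integral_comp_mul_left_Ioi _ _ (inv_pos.2 hσ),
    Measure.integral_comp_mul_left, abs_of_pos (inv_pos.2 (inv_pos.2 hσ)), smul_eq_mul,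
    smul_eq_mul, mul_div_mul_left _ _ (inv_ne_zero (inv_ne_zero hσ.ne')), inv_mul_eq_div]

lemma gaussTail_sub_mul_gaussTail_le (hσ : σ ≠ 0) {m : ℝ} (hm : 0 ≤ m) (y₀ y : ℝ) :
    gaussTail σ (y - m) - rexp ((m * y₀ - m ^ 2 / 2) / σ ^ 2) * gaussTail σ y ≤
      gaussTail σ (y₀ - m) - rexp ((m * y₀ - m ^ 2 / 2) / σ ^ 2) * gaussTail σ y₀ := by
  set k := rexp ((m * y₀ - m ^ 2 / 2) / σ ^ 2)
  set g : ℝ → ℝ := fun u => k * gaussWeight σ u - gaussWeight σ (u - m)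
  have hg : ∀ u, g u = (k - rexp ((m * u - m ^ 2 / 2) / σ ^ 2)) * gaussWeight σ u := fun u => by
    simp only [g, gaussWeight_sub]; ring
  have hexp {u v : ℝ} (huv : u ≤ v) :
      rexp ((m * u - m ^ 2 / 2) / σ ^ 2) ≤ rexp ((m * v - m ^ 2 / 2) / σ ^ 2) :=
    exp_le_exp.2 (div_le_div_of_nonneg_right (by nlinarith) (sq_nonneg σ))
  -- `g` changes sign from `+` to `-` at `y₀`
  have hint : 0 ≤ ∫ u in y..y₀, g u := by
    rcases le_total y y₀ with h | h
    · refine intervalIntegral.integral_nonneg h fun u hu => ?_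
      rw [hg]
      exact mul_nonneg (sub_nonneg.2 (hexp hu.2)) (gaussWeight_pos σ u).le
    · rw [intervalIntegral.integral_symm, ← intervalIntegral.integral_neg]
      refine intervalIntegral.integral_nonneg h fun u hu => ?_
      rw [hg, ← neg_mul]
      exact mul_nonneg (neg_nonneg.2 (sub_nonpos.2 (hexp hu.1))) (gaussWeight_pos σ u).le
  have hdiff :
      (gaussTail σ (y - m) - gaussTail σ (y₀ - m)) - k * (gaussTail σ y - gaussTail σ y₀) =
        -(∫ u in y..y₀, g u) / ∫ x, gaussWeight σ x := by
    have := continuous_gaussWeight σ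
    have hkw : Continuous fun u => k * gaussWeight σ u := by fun_prop
    have hcont : Continuous fun u => gaussWeight σ (u - m) := by fun_prop
    rw [gaussTail_sub_gaussTail hσ, gaussTail_sub_gaussTail hσ,
      ← intervalIntegral.integral_comp_sub_right, intervalIntegral.integral_sub
        (hkw.intervalIntegrable y y₀) (hcont.intervalIntegrable y y₀),
      intervalIntegral.integral_const_mul]
    ring
  have := div_nonneg hint (integral_gaussWeight_pos hσ).le
  rw [neg_div] at hdiff
  linarith

lemma Phi_eq_one_sub_gaussTail (x : ℝ) : Phi x = 1 - gaussTail 1 x := by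
  have hpdf : gaussianPDFReal 0 1 = fun u => (√(2 * π))⁻¹ * gaussWeight 1 u := by
    ext u; simp [gaussianPDFReal, gaussWeight]
  have htail : gaussTail 1 x =
      (∫ u in Ioi x, gaussianPDFReal 0 1 u) / ∫ u, gaussianPDFReal 0 1 u := by
    simp only [hpdf, integral_const_mul]
    rw [mul_div_mul_left _ _ (by positivity), gaussTail]
  rw [htail, integral_gaussianPDFReal_eq_one 0 one_ne_zero, div_one,
    ← ENNReal.toReal_ofReal (setIntegral_nonneg measurableSet_Ioi
      fun u _ => gaussianPDFReal_nonneg 0 1 u),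
    ← gaussianReal_apply_eq_integral 0 one_ne_zero, ← measureReal_def]
  rw [← probReal_compl_eq_one_sub measurableSet_Ioi, compl_Ioi]
  rfl

lemma gaussTail_eq_one_sub_Phi (hσ : 0 < σ) (y : ℝ) : gaussTail σ y = 1 - Phi (y / σ) := by
  rw [gaussTail_eq_gaussTail_one hσ, Phi_eq_one_sub_gaussTail, sub_sub_cancel]

lemma strictMono_Phi : StrictMono Phi := fun a b hab => by
  simpa [Phi_eq_one_sub_gaussTail] using strictAnti_gaussTail one_ne_zero hab

lemma continuous_Phi : Continuous Phi := by
  rw [funext Phi_eq_one_sub_gaussTail]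
  exact continuous_const.sub (continuous_gaussTail one_ne_zero)

lemma Phi_PhiInv {p : ℝ} (hp₀ : 0 < p) (hp₁ : p < 1) : Phi (PhiInv p) = p := by
  have hcdf : Phi = cdf (gaussianReal 0 1) := funext fun x => (cdf_eq_real _ x).symm
  obtain ⟨x, hx⟩ : p ∈ range Phi := by
    refine mem_range_of_exists_le_of_exists_ge continuous_Phi ?_ ?_ <;> rw [hcdf]
    · exact ((tendsto_cdf_atBot _).eventually (eventually_le_nhds hp₀)).exists
    · exact ((tendsto_cdf_atTop _).eventually (eventually_ge_nhds hp₁)).exists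
  have hset : {y | p ≤ Phi y} = Ici x := by
    ext y
    change p ≤ Phi y ↔ x ≤ y
    rw [← hx, strictMono_Phi.le_iff_le]
  rw [PhiInv, hset, csInf_Ici, hx]

lemma Gmu_le_one_sub {m α : ℝ} (hm : 0 ≤ m) (hα : α ∈ Ioo (0 : ℝ) 1) :
    Gmu m α ≤ 1 - α := by
  calc Gmu m α ≤ Phi (PhiInv (1 - α)) := strictMono_Phi.monotone (by linarith)
    _ = 1 - α := Phi_PhiInv (sub_pos.2 hα.2) (sub_lt_self 1 hα.1)

def latticePMF (t σ c : ℝ) (z : ℤ) : ℝ :=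
  gaussWeight σ (t * z - c) / ∑' y : ℤ, gaussWeight σ (t * y - c)

variable {t : ℝ}

lemma summable_gaussWeight_int (ht : t ≠ 0) (hσ : σ ≠ 0) (c : ℝ) :
    Summable fun z : ℤ => gaussWeight σ (t * z - c) := by
  have hτ : 0 < ((t ^ 2 / (2 * π * σ ^ 2) : ℝ) * Complex.I : ℂ).im := by
    rw [Complex.mul_I_im, Complex.ofReal_re]; positivity
  refine ((((summable_jacobiTheta₂_term_iff ((-(t * c) / (2 * π * σ ^ 2) : ℝ) * Complex.I)
    _).2 hτ).norm).mul_left (rexp (-c ^ 2 / (2 * σ ^ 2)))).congr fun n => ?_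
  rw [norm_jacobiTheta₂_term, gaussWeight, ← exp_add]
  congr 1
  simp only [Complex.mul_I_im, Complex.ofReal_re]
  field_simp
  ring

lemma latticePMF_nonneg (t σ c : ℝ) (z : ℤ) : 0 ≤ latticePMF t σ c z :=
  div_nonneg (gaussWeight_pos σ _).le (tsum_nonneg fun _ => (gaussWeight_pos σ _).le)

lemma summable_latticePMF (ht : t ≠ 0) (hσ : σ ≠ 0) (c : ℝ) :
    Summable (latticePMF t σ c) :=
  (summable_gaussWeight_int ht hσ c).div_const _

lemma tsum_latticePMF (ht : t ≠ 0) (hσ : σ ≠ 0) (c : ℝ) :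
    ∑' z, latticePMF t σ c z = 1 := by
  simp_rw [latticePMF, tsum_div_const]
  exact div_self ((summable_gaussWeight_int ht hσ c).tsum_pos
    (fun _ => (gaussWeight_pos σ _).le) 0 (gaussWeight_pos σ _)).ne'

lemma latticePMF_zero_neg (t σ : ℝ) (z : ℤ) :
    latticePMF t σ 0 (-z) = latticePMF t σ 0 z := by
  rw [latticePMF, latticePMF, Int.cast_neg, mul_neg, sub_zero, sub_zero, gaussWeight_neg]

lemma latticePMF_mul_int_add (t σ : ℝ) (z₀ z : ℤ) :
    latticePMF t σ (t * z₀) (z + z₀) = latticePMF t σ 0 z := by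
  have hshift (y : ℤ) : t * ((y + z₀ : ℤ) : ℝ) - t * z₀ = t * y - 0 := by push_cast; ring
  rw [latticePMF, latticePMF, hshift, ← (Equiv.addRight z₀).tsum_eq]
  simp only [Equiv.coe_addRight, hshift]

lemma latticePMF_mul_int (t σ : ℝ) (z₀ z : ℤ) :
    latticePMF t σ (t * z₀) z =
      rexp ((t * z₀ * (t * z) - (t * z₀) ^ 2 / 2) / σ ^ 2) * latticePMF t σ 0 z := by
  rw [← sub_add_cancel z z₀, latticePMF_mul_int_add, sub_add_cancel, latticePMF, latticePMF,
    mul_div_assoc', sub_zero, sub_zero (t * (z : ℝ)), Int.cast_sub, mul_sub, gaussWeight_sub]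

lemma integral_latticeGauss (ht : t ≠ 0) (hσ : σ ≠ 0) (c : ℝ) {φ : ℝ → ℝ}
    (hφm : Measurable φ) (hφ : ∀ x, φ x ∈ Icc (0 : ℝ) 1) :
    ∫ x, φ x ∂latticeGauss t (σ ^ 2) c = ∑' z, latticePMF t σ c z * φ (t * z) := by
  have hnn (z : ℤ) : 0 ≤ latticePMF t σ c z * φ (t * z) :=
    mul_nonneg (latticePMF_nonneg t σ c z) (hφ _).1
  have hsum : Summable fun z => latticePMF t σ c z * φ (t * z) :=
    (summable_latticePMF ht hσ c).of_nonneg_of_le hnn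
      fun z => mul_le_of_le_one_right (latticePMF_nonneg t σ c z) (hφ _).2
  change ∫ x, φ x ∂Measure.sum (fun z : ℤ => ENNReal.ofReal (latticePMF t σ c z) •
    Measure.dirac (t * (z : ℝ))) = _
  rw [integral_eq_lintegral_of_nonneg_ae (Eventually.of_forall fun x => (hφ x).1)
    hφm.aestronglyMeasurable, lintegral_sum_measure]
  simp_rw [lintegral_smul_measure, lintegral_dirac, smul_eq_mul,
    ← ENNReal.ofReal_mul (latticePMF_nonneg t σ c _)]
  rw [← ENNReal.ofReal_tsum_of_nonneg hnn hsum, ENNReal.toReal_ofReal (tsum_nonneg hnn)]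

lemma Ioc_mul_int_eq_Ioc_add_zsmul (t : ℝ) :
    (fun z : ℤ => Ioc (t * z - t) (t * z)) =
      fun z : ℤ => Ioc (-t + z • t) (-t + (z + 1) • t) := by
  ext1 z; simp only [zsmul_eq_mul]; push_cast; congr 1 <;> ring

lemma iUnion_Ioc_mul_int (ht : 0 < t) : ⋃ z : ℤ, Ioc (t * z - t) (t * z) = univ := by
  rw [Ioc_mul_int_eq_Ioc_add_zsmul]; exact iUnion_Ioc_add_zsmul ht (-t)

lemma pairwise_disjoint_Ioc_mul_int (t : ℝ) :
    Pairwise (Function.onFun Disjoint fun z : ℤ => Ioc (t * z - t) (t * z)) := by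
  rw [Ioc_mul_int_eq_Ioc_add_zsmul]; exact pairwise_disjoint_Ioc_add_zsmul (-t) t

lemma tsum_latticePMF_mul_int_subtype (t σ c : ℝ) (z₀ : ℤ) :
    ∑' z : {z : ℤ | c < t * z}, latticePMF t σ (t * z₀) z =
      ∑' z : {z : ℤ | c - t * z₀ < t * z}, latticePMF t σ 0 z := by
  rw [← (Equiv.addRight z₀).subtypeEquiv (p := (· ∈ {z : ℤ | c - t * z₀ < t * z}))
    (q := (· ∈ {z : ℤ | c < t * z}))
    (fun z => by
      simp only [mem_ofPred_eq, Equiv.coe_addRight, Int.cast_add]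
      constructor <;> intro h <;> linarith) |>.tsum_eq]
  simp only [mem_ofPred_eq, Equiv.subtypeEquiv_apply, Equiv.coe_addRight, latticePMF_mul_int_add]
  rfl

theorem tsum_latticePMF_le_gaussTail (ht : 0 < t) (hσ : σ ≠ 0) {A : Set ℤ} (hA : IsUpperSet A)
    {y : ℝ} (hy : ∀ z ∈ A, y ≤ t * z) :
    ∑' z : A, latticePMF t σ 0 z ≤ gaussTail σ (y - t) := by
  set a : ℤ → ℝ := fun z => gaussWeight σ (t * z - 0)
  set b : ℤ → ℝ := fun z => ∫ x in Ioc (t * z - t) (t * z), gaussWeight σ x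
  have hint := (integrable_gaussWeight hσ).integrableOn (s := univ)
  have hb : HasSum b (∫ x, gaussWeight σ x) := by
    simpa [iUnion_Ioc_mul_int ht] using hasSum_integral_iUnion (fun _ => measurableSet_Ioc)
      (pairwise_disjoint_Ioc_mul_int t) ((iUnion_Ioc_mul_int ht).symm ▸ hint)
  have hbA : ∑' z : A, b z ≤ ∫ x in Ioi (y - t), gaussWeight σ x := by
    refine (hasSum_integral_iUnion (fun _ => measurableSet_Ioc)
      ((pairwise_disjoint_Ioc_mul_int t).comp_of_injective Subtype.val_injective)
      (hint.mono_set (subset_univ _))).tsum_eq.le.trans ?_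
    refine setIntegral_mono_set (integrable_gaussWeight hσ).integrableOn
      (Eventually.of_forall fun x => (gaussWeight_pos σ x).le) (LE.le.eventuallyLE ?_)
    intro x
    simp only [mem_iUnion, mem_Ioc, mem_Ioi]
    rintro ⟨⟨z, hz⟩, hx, -⟩
    linarith [hy z hz]
  -- the ratio `b z / a z` increases with `z`
  have hab : ∀ z ∈ A, ∀ z' ∉ A, a z * b z' ≤ b z * a z' := fun z hz z' hz' => by
    have hzz' : (z' : ℝ) ≤ z := by
      exact_mod_cast (not_le.1 fun h => hz' (hA h hz)).le
    simp only [a, b, sub_zero, ← intervalIntegral.integral_of_le (sub_le_self _ ht.le)]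
    exact gaussWeight_mul_integral_le (by gcongr) ht.le
  have hcorr := tsum_subtype_mul_tsum_le (summable_gaussWeight_int ht.ne' hσ 0) hb.summable hab
  have hS : 0 < ∑' z, a z := (summable_gaussWeight_int ht.ne' hσ 0).tsum_pos
    (fun _ => (gaussWeight_pos σ _).le) 0 (gaussWeight_pos σ _)
  have hI := integral_gaussWeight_pos hσ
  rw [hb.tsum_eq] at hcorr
  simp only [latticePMF, tsum_div_const, gaussTail]
  rw [div_le_div_iff₀ hS hI]
  nlinarith [mul_le_mul_of_nonneg_right hbA hS.le]

theorem gaussTail_le_tsum_latticePMF (ht : 0 < t) (hσ : σ ≠ 0) (y : ℝ) :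
    gaussTail σ (y + t) ≤ ∑' z : {z : ℤ | y < t * z}, latticePMF t σ 0 z := by
  set A : Set ℤ := {z | y < t * z}
  have hsum := summable_latticePMF ht.ne' hσ 0
  have hreflect :
      ∑' z : ↥Aᶜ, latticePMF t σ 0 z = ∑' z : {z : ℤ | -y ≤ t * z}, latticePMF t σ 0 z := by
    rw [← (Equiv.neg ℤ).subtypeEquiv (p := (· ∈ {z : ℤ | -y ≤ t * z})) (q := (· ∈ Aᶜ))
      (fun z => by
        simp only [mem_ofPred_eq, Equiv.neg_apply, mem_compl_iff, Int.cast_neg, mul_neg, not_lt, A]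
        constructor <;> intro h <;> linarith) |>.tsum_eq]
    simp only [mem_ofPred_eq, Equiv.subtypeEquiv_apply, Equiv.neg_apply, latticePMF_zero_neg]
    rfl
  have hup := tsum_latticePMF_le_gaussTail ht hσ (A := {z : ℤ | -y ≤ t * z})
    (fun z z' hzz' (hz : -y ≤ t * z) =>
      hz.trans (mul_le_mul_of_nonneg_left (by exact_mod_cast hzz') ht.le)) fun z hz => hz
  have hsplit : ∑' z : A, latticePMF t σ 0 z + ∑' z : ↥Aᶜ, latticePMF t σ 0 z = 1 :=
    ((hsum.subtype A).tsum_add_tsum_compl (hsum.subtype Aᶜ)).trans (tsum_latticePMF ht.ne' hσ 0)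
  rw [hreflect] at hsplit
  have := gaussTail_add_gaussTail_neg hσ (y + t)
  rw [show -y - t = -(y + t) by ring] at hup
  linarith

theorem tsum_latticePMF_mul_sub_le (ht : 0 < t) (hσ : σ ≠ 0) {z₀ : ℤ} (hΔ : 0 < t * z₀)
    {s : ℝ} (hs : s = t * z₀ + 2 * t) (y₀ : ℝ) {φ : ℤ → ℝ}
    (hφ : ∀ z, φ z ∈ Icc (0 : ℝ) 1) :
    ∑' z, latticePMF t σ (t * z₀) z * φ z -
        rexp ((s * y₀ - s ^ 2 / 2) / σ ^ 2) * ∑' z, latticePMF t σ 0 z * φ z ≤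
      gaussTail σ (y₀ - s) - rexp ((s * y₀ - s ^ 2 / 2) / σ ^ 2) * gaussTail σ y₀ := by
  set Δ := t * z₀
  set k := rexp ((s * y₀ - s ^ 2 / 2) / σ ^ 2)
  -- the likelihood ratio of the two lattice Gaussians crosses `k` at `c`
  set c := (s * y₀ - s ^ 2 / 2) / Δ + Δ / 2 with hc
  have hk : rexp ((Δ * c - Δ ^ 2 / 2) / σ ^ 2) = k := by
    rw [hc]; congr 2; field_simp; ring
  have hratio {u v : ℝ} (huv : u ≤ v) :
      rexp ((Δ * u - Δ ^ 2 / 2) / σ ^ 2) ≤ rexp ((Δ * v - Δ ^ 2 / 2) / σ ^ 2) :=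
    exp_le_exp.2 (div_le_div_of_nonneg_right (by nlinarith) (sq_nonneg σ))
  set A : Set ℤ := {z | c < t * z}
  have hNP := tsum_mul_sub_le_tsum_subtype_sub (summable_latticePMF ht.ne' hσ 0)
    (summable_latticePMF ht.ne' hσ Δ) hφ (k := k) (A := A)
    (fun z hz => by
      rw [latticePMF_mul_int, ← hk]
      exact mul_le_mul_of_nonneg_right (hratio (le_of_lt hz)) (latticePMF_nonneg _ _ _ _))
    (fun z hz => by
      rw [latticePMF_mul_int, ← hk]
      exact mul_le_mul_of_nonneg_right (hratio (not_lt.1 hz)) (latticePMF_nonneg _ _ _ _))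
  have hup := tsum_latticePMF_le_gaussTail ht hσ (A := {z : ℤ | c - Δ < t * z})
    (fun z z' hzz' (hz : c - Δ < t * z) =>
      hz.trans_le (mul_le_mul_of_nonneg_left (by exact_mod_cast hzz') ht.le))
    fun z hz => le_of_lt hz
  have hlow := gaussTail_le_tsum_latticePMF ht hσ c
  have hhockey := gaussTail_sub_mul_gaussTail_le hσ (m := s) (by linarith) y₀ (c + t)
  rw [show c + t - s = c - Δ - t by rw [hs]; ring] at hhockey
  rw [tsum_latticePMF_mul_int_subtype] at hNP
  nlinarith [mul_le_mul_of_nonneg_left hlow (exp_pos ((s * y₀ - s ^ 2 / 2) / σ ^ 2)).le]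

theorem Gmu_le_one_sub_integral_latticeGauss (ht : 0 < t) (hσ : 0 < σ) {z₀ : ℤ}
    (hΔ : 0 < t * z₀) {α : ℝ} (hα : α ∈ Ioo (0 : ℝ) 1) {φ : ℝ → ℝ}
    (hφm : Measurable φ) (hφ : ∀ x, φ x ∈ Icc (0 : ℝ) 1)
    (hP : ∫ x, φ x ∂latticeGauss t (σ ^ 2) 0 ≤ α) :
    Gmu ((t * z₀ + 2 * t) / σ) α ≤ 1 - ∫ x, φ x ∂latticeGauss t (σ ^ 2) (t * z₀) := by
  set s := t * z₀ + 2 * t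
  set x₀ := PhiInv (1 - α)
  have hx₀ : Phi x₀ = 1 - α := Phi_PhiInv (sub_pos.2 hα.2) (sub_lt_self 1 hα.1)
  rw [integral_latticeGauss ht.ne' hσ.ne' _ hφm hφ] at hP ⊢
  have hNP := tsum_latticePMF_mul_sub_le ht hσ.ne' hΔ rfl (σ * x₀) fun z => hφ (t * z)
  rw [gaussTail_eq_one_sub_Phi hσ, gaussTail_eq_one_sub_Phi hσ, mul_div_cancel_left₀ _ hσ.ne',
    hx₀] at hNP
  have hG : Gmu (s / σ) α = Phi ((σ * x₀ - s) / σ) := by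
    rw [Gmu, sub_div, mul_div_cancel_left₀ _ hσ.ne']
  rw [hG]
  nlinarith [mul_le_mul_of_nonneg_left hP (exp_pos ((s * (σ * x₀) - s ^ 2 / 2) / σ ^ 2)).le]

end

/-- the trade-off function between the lattice discrete Gaussians
`N_{tℤ}(0,σ²)` and `N_{tℤ}(Δ,σ²)` is at least `G_{(Δ+2t)/σ}`. -/
theorem latticeGauss_tradeoff_bound (t σ Δ : ℝ) (ht : 0 < t)
    (hσ : t / Real.sqrt (2 * π) < σ) (hΔ : 0 ≤ Δ) (hΔmem : ∃ z : ℤ, Δ = t * (z : ℝ)) :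
    ∀ α ∈ Set.Ioo (0 : ℝ) 1,
      Gmu ((Δ + 2 * t) / σ) α ≤
        tradeOff (latticeGauss t (σ ^ 2) 0) (latticeGauss t (σ ^ 2) Δ) α := by
  intro α hα
  have hσ₀ : 0 < σ := (div_nonneg ht.le (sqrt_nonneg _)).trans_lt hσ
  obtain ⟨z₀, rfl⟩ := hΔmem
  refine le_csInf ⟨_, fun _ => 0, measurable_const, fun _ => ⟨le_rfl, zero_le_one⟩,
    by simpa using hα.1.le, rfl⟩ ?_
  rintro _ ⟨φ, hφm, hφ, hP, rfl⟩
  rcases hΔ.eq_or_lt with hΔ₀ | hΔ₀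
  · rw [← hΔ₀]
    exact (Gmu_le_one_sub (by positivity) hα).trans (by linarith)
  · exact Gmu_le_one_sub_integral_latticeGauss ht hσ₀ hΔ₀ hα hφm hφ hP
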